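/- arXiv:2504.08376 — 7 statements merged into one kernel-verified Lean document; each statement's English description precedes it below -/
import Mathlib

section
/- Let x_1,...,x_n be natural numbers with sum X and each x_i ≤ x, and let k be a positive natural number. Then there exists a partition of [1..n] into k sets I_1,...,I_k, each consisting of consecutive elements, such that for each j, the sum of x_i over i in I_j is at most X/k + x. -/
/-!
Cut `[1..n]` after the last index whose prefix sum is at most `j X / k`, for `j = 1, …, k`.
The prefix sum at such a cut lies in `(j X / k - x, j X / k]`, since the next element would push
it past the threshold and weighs at most `x`; so two consecutive cuts enclose weight at most
`X / k + x`.
-/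

open Finset Function

theorem Monotone.pairwise_disjoint_on_finset_Ioc_succ {β : Type*} [LinearOrder β]
    [LocallyFiniteOrder β] {c : ℕ → β} (hc : Monotone c) :
    Pairwise (Disjoint on fun j => Ioc (c j) (c (j + 1))) := fun i j h => by
  simpa [← disjoint_coe] using hc.pairwise_disjoint_on_Ioc_succ h

theorem Monotone.biUnion_range_finset_Ioc_succ {β : Type*} [LinearOrder β] [LocallyFiniteOrder β]
    {c : ℕ → β} (hc : Monotone c) (k : ℕ) :
    (range k).biUnion (fun j => Ioc (c j) (c (j + 1))) = Ioc (c 0) (c k) := by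
  induction k with
  | zero => simp
  | succ k ih =>
    rw [range_add_one, biUnion_insert, ih, union_comm,
      Ioc_union_Ioc_eq_Ioc (hc k.zero_le) (hc k.le_succ)]

namespace BalancedCut

variable (x : ℕ → ℝ) (n : ℕ)

open Classical in
noncomputable def cutPoint (t : ℝ) : ℕ :=
  Nat.findGreatest (fun m => ∑ i ∈ Ioc 0 m, x i ≤ t) n

variable {x n}

theorem cutPoint_le (t : ℝ) : cutPoint x n t ≤ n := Nat.findGreatest_le n

theorem sum_Ioc_cutPoint_le {t : ℝ} (ht : 0 ≤ t) : ∑ i ∈ Ioc 0 (cutPoint x n t), x i ≤ t :=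
  Nat.findGreatest_spec (P := fun m => ∑ i ∈ Ioc 0 m, x i ≤ t) n.zero_le (by simpa using ht)

theorem cutPoint_mono : Monotone (cutPoint x n) := fun _ _ h =>
  Nat.findGreatest_mono_left (fun _ hm => hm.trans h) n

theorem cutPoint_of_sum_le {t : ℝ} (h : ∑ i ∈ Ioc 0 n, x i ≤ t) : cutPoint x n t = n :=
  Nat.findGreatest_eq h

theorem sub_le_sum_Ioc_cutPoint {b t : ℝ} (hb₀ : 0 ≤ b) (hb : ∀ i ∈ Ioc 0 n, x i ≤ b)
    (ht : t ≤ ∑ i ∈ Ioc 0 n, x i) : t - b ≤ ∑ i ∈ Ioc 0 (cutPoint x n t), x i := by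
  rcases (cutPoint_le (x := x) t).lt_or_eq with hlt | heq
  · have hnext : t < ∑ i ∈ Ioc 0 (cutPoint x n t + 1), x i :=
      not_le.mp (Nat.findGreatest_is_greatest (Nat.lt_succ_self _) hlt)
    rw [sum_Ioc_succ_top (Nat.zero_le _)] at hnext
    have hstep := hb (cutPoint x n t + 1) (mem_Ioc.mpr ⟨Nat.succ_pos _, hlt⟩)
    linarith
  · rw [heq]
    linarith

variable (x n) in
/-- The `0`-th cut is set to `0` by hand: the threshold `0` would cut after a run of leading
zero weights, leaving them uncovered. -/
noncomputable def balancedCut (k j : ℕ) : ℕ :=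
  if j = 0 then 0 else cutPoint x n (j * (∑ i ∈ Ioc 0 n, x i) / k)

theorem balancedCut_zero (k : ℕ) : balancedCut x n k 0 = 0 := if_pos rfl

theorem balancedCut_self {k : ℕ} (hk : k ≠ 0) : balancedCut x n k k = n := by
  rw [balancedCut, if_neg hk, mul_div_cancel_left₀ _ (Nat.cast_ne_zero.mpr hk)]
  exact cutPoint_of_sum_le le_rfl

theorem balancedCut_mono (k : ℕ) (hX : 0 ≤ ∑ i ∈ Ioc 0 n, x i) :
    Monotone (balancedCut x n k) := by
  intro j j' h
  unfold balancedCut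
  split_ifs with hj hj'
  · exact le_rfl
  · exact Nat.zero_le _
  · omega
  · exact cutPoint_mono (by gcongr)

theorem sum_Ioc_balancedCut_le {b : ℝ} {k j : ℕ} (hX : 0 ≤ ∑ i ∈ Ioc 0 n, x i) (hb₀ : 0 ≤ b)
    (hb : ∀ i ∈ Ioc 0 n, x i ≤ b) (hj : j < k) :
    ∑ i ∈ Ioc (balancedCut x n k j) (balancedCut x n k (j + 1)), x i
      ≤ (∑ i ∈ Ioc 0 n, x i) / k + b := by
  set X := ∑ i ∈ Ioc 0 n, x i
  have hk : (0 : ℝ) < k := by exact_mod_cast (Nat.zero_le j).trans_lt hj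
  have hupper : ∑ i ∈ Ioc 0 (balancedCut x n k (j + 1)), x i ≤ (j + 1 : ℕ) * X / k := by
    rw [balancedCut, if_neg j.succ_ne_zero]
    exact sum_Ioc_cutPoint_le (by positivity)
  have hlower : j * X / k - b ≤ ∑ i ∈ Ioc 0 (balancedCut x n k j), x i := by
    unfold balancedCut
    split_ifs with hj0
    · simp [hj0, hb₀]
    · refine sub_le_sum_Ioc_cutPoint hb₀ hb ?_
      rw [div_le_iff₀ hk, mul_comm X]
      gcongr
  rw [← sum_Ioc_consecutive _ (Nat.zero_le _) (balancedCut_mono k hX j.le_succ)] at hupper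
  have : (j + 1 : ℕ) * X / k = j * X / k + X / k := by push_cast; ring
  linarith

end BalancedCut

open BalancedCut in
/-- Partition of `[1..n]` into `k` consecutive intervals with balanced weight:
if `x₁,…,xₙ` are naturals summing to `X`, each at most `x`, then `[1..n]` splits into
`k` disjoint intervals (possibly empty) whose union is `[1..n]` and each of which
carries total weight at most `X/k + x`. -/
theorem stmt0 (n k : ℕ) (hk : 0 < k) (x : ℕ → ℕ) (xb X : ℕ)
    (hX : ∑ i ∈ Finset.Icc 1 n, x i = X)
    (hb : ∀ i ∈ Finset.Icc 1 n, x i ≤ xb) :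
    ∃ I : Fin k → Finset ℕ,
      (∀ j, ∃ a b, I j = Finset.Icc a b) ∧
      (∀ j j', j ≠ j' → Disjoint (I j) (I j')) ∧
      (Finset.univ.biUnion I = Finset.Icc 1 n) ∧
      (∀ j, (∑ i ∈ I j, (x i : ℝ)) ≤ (X : ℝ) / k + xb) := by
  have hIcc : Icc 1 n = Ioc 0 n := Icc_add_one_left_eq_Ioc 0 n
  have hsum : ∑ i ∈ Ioc 0 n, (x i : ℝ) = X := by
    rw [← hIcc, ← hX, Nat.cast_sum]
  have hx : ∀ i ∈ Ioc 0 n, (x i : ℝ) ≤ xb := fun i hi => by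
    exact_mod_cast hb i (hIcc ▸ hi)
  have hsum₀ : 0 ≤ ∑ i ∈ Ioc 0 n, (x i : ℝ) := hsum ▸ X.cast_nonneg
  have hc : Monotone (balancedCut (fun i => (x i : ℝ)) n k) := balancedCut_mono k hsum₀
  have hc₀ := balancedCut_zero (x := fun i => (x i : ℝ)) (n := n) k
  have hck := balancedCut_self (x := fun i => (x i : ℝ)) (n := n) hk.ne'
  set c := balancedCut (fun i => (x i : ℝ)) n k
  refine ⟨fun j => Ioc (c j) (c (j + 1)), fun j => ⟨_, _, (Icc_add_one_left_eq_Ioc _ _).symm⟩,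
    fun j j' h => hc.pairwise_disjoint_on_finset_Ioc_succ (Fin.val_injective.ne h), ?_,
    fun j => hsum ▸ sum_Ioc_balancedCut_le hsum₀ xb.cast_nonneg hx j.isLt⟩
  calc univ.biUnion (fun j : Fin k => Ioc (c j) (c (j + 1)))
      = (range k).biUnion (fun j => Ioc (c j) (c (j + 1))) := by
        ext; simp [Fin.exists_iff, and_left_comm]
    _ = Icc 1 n := by
      rw [hc.biUnion_range_finset_Ioc_succ, hc₀, hck, hIcc]
end

section
/- Let A and B be strings over a linearly ordered alphabet, each partitioned into blocks of length m (the last block possibly shorter). Let A' and B' be the strings obtained by replacing each block by its rank in the lexicographic order among all blocks occurring in A and B. Then A ≤lex B if and only if A' ≤lex B'. -/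
/-!
Compare `A` and `B` block by block. Equal blocks get equal ranks, and at the first pair of
blocks that differ, the block coming from the smaller string is the lexicographically smaller
one, because taking the prefix of length `m` is monotone for `≤lex`; so its rank is smaller.
Hence `A < B` implies `A' < B'`, and the equivalence follows by trichotomy.
-/

namespace List

variable {α : Type*}

theorem toChunks_go_eq_append (n : ℕ) :
    ∀ (xs : List α) (acc₁ : Array α) (acc₂ : Array (List α)),
      toChunks.go n xs acc₁ acc₂ = acc₂.toList ++ toChunks.go n xs acc₁ #[]
  | [], acc₁, acc₂ => by simp [toChunks.go]
  | x :: xs, acc₁, acc₂ => by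
    simp only [toChunks.go]
    split
    · rw [toChunks_go_eq_append n xs _ (acc₂.push _),
        toChunks_go_eq_append n xs _ (#[].push _)]
      simp
    · exact toChunks_go_eq_append n xs _ _

theorem toChunks_go_of_size_le (n : ℕ) :
    ∀ (xs : List α) (acc : Array α), acc.size ≤ n + 1 →
      toChunks.go (n + 1) xs acc #[] =
        (acc.toList ++ xs.take (n + 1 - acc.size)) :: (xs.drop (n + 1 - acc.size)).toChunks (n + 1)
  | [], acc, _ => by simp [toChunks.go, toChunks]
  | x :: xs, acc, hacc => by
    simp only [toChunks.go]
    split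
    · rw [toChunks_go_eq_append]
      simp_all [toChunks]
    · have hlt : acc.size < n + 1 := by simp_all; omega
      rw [toChunks_go_of_size_le n xs _ (by rw [Array.size_push]; omega),
        show n + 1 - acc.size = n - acc.size + 1 by omega]
      simp

theorem toChunks_eq_take_cons_drop {m : ℕ} (hm : 0 < m) {l : List α} (hl : l ≠ []) :
    l.toChunks m = l.take m :: (l.drop m).toChunks m := by
  obtain ⟨n, rfl⟩ : ∃ n, m = n + 1 := ⟨m - 1, by omega⟩
  obtain ⟨x, xs, rfl⟩ := exists_cons_of_ne_nil hl
  show toChunks.go (n + 1) xs #[x] #[] = _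
  rw [toChunks_go_of_size_le n xs #[x] (by simp)]
  simp

theorem append_lt_append_iff_left [Preorder α] (u : List α) {s t : List α} :
    u ++ s < u ++ t ↔ s < t := by
  induction u with
  | nil => rfl
  | cons a u ih => simpa using ih

theorem lt_of_take_lt_take [LT α] :
    ∀ (k : ℕ) {s t : List α}, s.take k < t.take k → s < t
  | 0, _, _, h => absurd h (not_lt_nil _)
  | _, [], [], h => by simp at h
  | _, [], _ :: _, _ => nil_lt_cons _ _
  | _, _ :: _, [], h => by simp at h
  | k + 1, a :: s, b :: t, h => by
    rw [take_succ_cons, take_succ_cons, cons_lt_cons_iff] at h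
    rw [cons_lt_cons_iff]
    exact h.imp_right (And.imp_right (lt_of_take_lt_take k))

theorem map_toChunks_lt_map_toChunks [LinearOrder α] {β : Type*} [Preorder β]
    {m : ℕ} (hm : 0 < m) {r : List α → β} :
    ∀ {A B : List α}, StrictMonoOn r {u | u ∈ A.toChunks m ++ B.toChunks m} → A < B →
      (A.toChunks m).map r < (B.toChunks m).map r
  | [], [], _, h => absurd h (List.lt_irrefl _)
  | [], b :: B, _, _ => by
    rw [toChunks_eq_take_cons_drop hm (cons_ne_nil b B)]
    exact nil_lt_cons _ _
  | _ :: _, [], _, h => absurd h (not_lt_nil _)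
  | a :: A, b :: B, hr, h => by
    rw [toChunks_eq_take_cons_drop hm (cons_ne_nil a A),
      toChunks_eq_take_cons_drop hm (cons_ne_nil b B)] at hr ⊢
    rw [map_cons, map_cons, cons_lt_cons_iff]
    rcases lt_trichotomy ((a :: A).take m) ((b :: B).take m) with hlt | heq | hgt
    · exact .inl (hr (by simp) (by simp) hlt)
    · refine .inr ⟨congrArg r heq, map_toChunks_lt_map_toChunks hm ?_ ?_⟩
      · exact hr.mono fun u hu => by
          simp only [Set.mem_ofPred_eq, mem_append, mem_cons] at hu ⊢
          tauto
      · rwa [← append_lt_append_iff_left ((a :: A).take m), take_append_drop, heq,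
          take_append_drop]
    · exact absurd (lt_of_take_lt_take m hgt) (List.lt_asymm h)
  termination_by A => A.length

end List

/-- Renaming preserves lexicographic order: partition strings `A`, `B` into blocks of
length `m`, and replace each block by its rank `r`, where `r` is strictly monotone
(w.r.t. the lexicographic order) on the blocks occurring in `A` and `B`.
Then `A ≤lex B` iff `A' ≤lex B'`. -/
theorem stmt1 {α : Type*} [LinearOrder α] (m : ℕ) (hm : 0 < m) (A B : List α)
    (r : List α → ℕ)
    (hr : ∀ u ∈ A.toChunks m ++ B.toChunks m, ∀ v ∈ A.toChunks m ++ B.toChunks m,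
      u < v → r u < r v) :
    A ≤ B ↔ (A.toChunks m).map r ≤ (B.toChunks m).map r := by
  have hr' : StrictMonoOn r {u | u ∈ A.toChunks m ++ B.toChunks m} := hr
  rcases lt_trichotomy A B with h | rfl | h
  · exact iff_of_true h.le (List.map_toChunks_lt_map_toChunks hm hr' h).le
  · simp
  · have hr'' : StrictMonoOn r {u | u ∈ B.toChunks m ++ A.toChunks m} :=
      hr'.mono fun u hu => by simp_all [or_comm]
    exact iff_of_false (not_le_of_gt h)
      (not_le_of_gt (List.map_toChunks_lt_map_toChunks hm hr'' h))
end

section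
/- Let u and v be strings, and suppose t_1 < t_2 < ... < t_h (h ≥ 3) are all the starting positions of occurrences of u in v, satisfying t_{i+2} - t_i ≤ |u| for all i ∈ [1..h-2]. Then the sequence t_1,...,t_h forms an arithmetic progression whose common difference equals the period length of u. -/
/-!
Consecutive occurrences at distance `g` make `g` a period of `u`. Density gives
`minPeriod u + g ≤ |u|` for every gap `g`, so by the Fine–Wilf periodicity lemma the minimal
period `d` divides `g`. If some gap were `≥ 2d`, the two occurrences bounding it, glued with
period `d`, would produce a further occurrence `d` positions after the first one, strictly
between them.
-/

namespace List

variable {α : Type*}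

theorem hasPeriod_iff_forall_add_lt {w : List α} {p : ℕ} :
    w.HasPeriod p ↔ ∀ j, j + p < w.length → w[j]? = w[j + p]? := by
  rw [hasPeriod_iff_getElem?]
  exact forall_congr' fun j => imp_congr_left (by omega)

theorem HasPeriod.of_dvd {w : List α} {p q : ℕ} (hp : w.HasPeriod p) (hpq : p ∣ q) :
    w.HasPeriod q := by
  rw [hasPeriod_iff_forall_getElem?_mod] at hp ⊢
  intro i hi
  rw [hp i hi, hp (i % q) (lt_of_le_of_lt (Nat.mod_le i q) hi), Nat.mod_mod_of_dvd i hpq]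

theorem exists_pos_hasPeriod (w : List α) : ∃ p, 0 < p ∧ w.HasPeriod p :=
  ⟨w.length + 1, by omega, hasPeriod_of_length_le w _ (by omega)⟩

/-- The least positive period; it exceeds `w.length` only for `w = []`. -/
noncomputable def minPeriod (w : List α) : ℕ := sInf {p | 0 < p ∧ w.HasPeriod p}

theorem minPeriod_pos (w : List α) : 0 < w.minPeriod :=
  (Nat.sInf_mem (exists_pos_hasPeriod w)).1

theorem hasPeriod_minPeriod (w : List α) : w.HasPeriod w.minPeriod :=
  (Nat.sInf_mem (exists_pos_hasPeriod w)).2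

theorem minPeriod_le {w : List α} {p : ℕ} (hp : 0 < p) (hper : w.HasPeriod p) :
    w.minPeriod ≤ p :=
  Nat.sInf_le ⟨hp, hper⟩

theorem minPeriod_dvd {w : List α} {p : ℕ} (hp : 0 < p) (hper : w.HasPeriod p)
    (hlen : w.minPeriod + p ≤ w.length) : w.minPeriod ∣ p := by
  have hgcd := (hasPeriod_minPeriod w).gcd hper (by omega)
  have hle := minPeriod_le (Nat.gcd_pos_of_pos_right _ hp) hgcd
  have hge := Nat.le_of_dvd (minPeriod_pos w) (Nat.gcd_dvd_left w.minPeriod p)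
  rw [← le_antisymm hge hle]
  exact Nat.gcd_dvd_right _ _

def OccursAt (u v : List α) (p : ℕ) : Prop :=
  (v.drop p).take u.length = u ∧ p + u.length ≤ v.length

theorem occursAt_iff_getElem? {u v : List α} {p : ℕ} :
    u.OccursAt v p ↔ p + u.length ≤ v.length ∧ ∀ j < u.length, v[p + j]? = u[j]? := by
  refine ⟨fun ⟨htake, hlen⟩ => ⟨hlen, fun j hj => ?_⟩, fun ⟨hlen, hget⟩ => ⟨?_, hlen⟩⟩
  · rw [← getElem?_drop, ← getElem?_take_of_lt hj, htake]
  · refine ext_getElem? fun j => ?_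
    rw [getElem?_take]
    split_ifs with hj
    · rw [getElem?_drop, hget j hj]
    · rw [getElem?_eq_none (by omega)]

theorem OccursAt.hasPeriod_sub {u v : List α} {p q : ℕ} (hp : u.OccursAt v p)
    (hq : u.OccursAt v q) (hpq : p ≤ q) : u.HasPeriod (q - p) := by
  rw [hasPeriod_iff_forall_add_lt]
  intro j hj
  have hpj := (occursAt_iff_getElem?.1 hp).2 (j + (q - p)) hj
  rw [← (occursAt_iff_getElem?.1 hq).2 j (by omega), ← hpj]
  congr 1
  omega

/-- The new occurrence reads its prefix off the first occurrence shifted by `d`, and its suffix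
off the second one, shifted back by the multiple `q - p - d` of the period. -/
theorem OccursAt.add_of_dvd_sub {u v : List α} {p q d : ℕ} (hp : u.OccursAt v p)
    (hq : u.OccursAt v q) (hper : u.HasPeriod d) (hd : d ∣ q - p) (hpq : p + d ≤ q)
    (hqp : q ≤ p + u.length) : u.OccursAt v (p + d) := by
  rw [occursAt_iff_getElem?] at hp hq ⊢
  refine ⟨by omega, fun j hj => ?_⟩
  by_cases hjd : j + d < u.length
  · rw [hasPeriod_iff_forall_add_lt.1 hper j hjd, ← hp.2 (j + d) hjd]
    congr 1
    omega
  · have hrest : u.HasPeriod (q - p - d) := hper.of_dvd (Nat.dvd_sub hd dvd_rfl)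
    have hshift := hasPeriod_iff_forall_add_lt.1 hrest (p + d + j - q) (by omega)
    rw [show p + d + j - q + (q - p - d) = j by omega] at hshift
    rw [← hshift, ← hq.2 (p + d + j - q) (by omega)]
    congr 1
    omega

theorem OccursAt.sub_eq_minPeriod {u v : List α} {p q : ℕ} (hp : u.OccursAt v p)
    (hq : u.OccursAt v q) (hpq : p < q) (hbetween : ∀ r, u.OccursAt v r → r ≤ p ∨ q ≤ r)
    (hlen : u.minPeriod + (q - p) ≤ u.length) : q - p = u.minPeriod := by
  obtain ⟨k, hk⟩ := minPeriod_dvd (by omega) (hp.hasPeriod_sub hq hpq.le) hlen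
  by_contra hne
  have hk2 : 2 ≤ k := by rcases k with _ | _ | k <;> omega
  have := minPeriod_pos u
  have := Nat.mul_le_mul_left u.minPeriod hk2
  have hnew := hp.add_of_dvd_sub hq (hasPeriod_minPeriod u) ⟨k, hk⟩ (by omega) (by omega)
  rcases hbetween _ hnew with h | h <;> omega

end List

theorem stmt2_general {α : Type*} (u v : List α) (h : ℕ) (hh : 3 ≤ h)
    (t : ℕ → ℕ)
    (hmono : ∀ i j, i < j → j < h → t i < t j)
    (hocc : ∀ p, ((v.drop p).take u.length = u ∧ p + u.length ≤ v.length) ↔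
      ∃ i < h, t i = p)
    (hdense : ∀ i, i + 2 < h → t (i + 2) - t i ≤ u.length) :
    ∃ d, (∀ i, i + 1 < h → t (i + 1) - t i = d) ∧
      0 < d ∧ (∀ j, j + d < u.length → u[j]? = u[j + d]?) ∧
      (∀ p, 0 < p → (∀ j, j + p < u.length → u[j]? = u[j + p]?) → d ≤ p) := by
  have hstrict : StrictMonoOn t (Set.Iio h) := fun i hi j hj hij => hmono i j hij hj
  have hoccurs (i : ℕ) (hi : i < h) : u.OccursAt v (t i) := (hocc _).2 ⟨i, hi, rfl⟩
  have hgap_lt (i : ℕ) (hi : i + 1 < h) : t i < t (i + 1) := hmono i (i + 1) (by omega) hi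
  have hgap_ge (i : ℕ) (hi : i + 1 < h) : u.minPeriod ≤ t (i + 1) - t i :=
    List.minPeriod_le (by have := hgap_lt i hi; omega)
      ((hoccurs i (by omega)).hasPeriod_sub (hoccurs (i + 1) hi) (hgap_lt i hi).le)
  -- Since `h ≥ 3`, every gap has a neighbouring gap, and the two together span at most `|u|`.
  have hgap_add (i : ℕ) (hi : i + 1 < h) : u.minPeriod + (t (i + 1) - t i) ≤ u.length := by
    have := hgap_lt i hi
    by_cases hi2 : i + 2 < h
    · have : t (i + 1 + 1) - t i ≤ u.length := hdense i hi2
      have := hgap_ge (i + 1) hi2; have := hgap_lt (i + 1) hi2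
      omega
    · obtain ⟨k, rfl⟩ : ∃ k, i = k + 1 := ⟨i - 1, by omega⟩
      have : t (k + 1 + 1) - t k ≤ u.length := hdense k (by omega)
      have := hgap_ge k (by omega); have := hgap_lt k (by omega)
      omega
  have hgap (i : ℕ) (hi : i + 1 < h) : t (i + 1) - t i = u.minPeriod := by
    refine (hoccurs i (by omega)).sub_eq_minPeriod (hoccurs (i + 1) hi) (hgap_lt i hi)
      (fun r hr => ?_) (hgap_add i hi)
    obtain ⟨m, hm, rfl⟩ := (hocc r).1 hr
    rcases Nat.lt_or_ge m (i + 1) with hmi | hmi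
    · exact Or.inl ((hstrict.le_iff_le hm (Set.mem_Iio.2 (by omega))).2 (by omega))
    · exact Or.inr ((hstrict.le_iff_le hi hm).2 hmi)
  exact ⟨u.minPeriod, hgap, List.minPeriod_pos u,
    List.hasPeriod_iff_forall_add_lt.1 (List.hasPeriod_minPeriod u),
    fun p hp hper => List.minPeriod_le hp (List.hasPeriod_iff_forall_add_lt.2 hper)⟩

/-- Breslauer–Galil: if `t 0 < t 1 < ⋯ < t (h-1)` (with `h ≥ 3`) are all the occurrences
of `u` in `v` and `t (i+2) - t i ≤ |u|` for all `i`, then the occurrences form an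
arithmetic progression whose common difference is the period length of `u`. -/
theorem stmt2 {α : Type*} [DecidableEq α] (u v : List α) (h : ℕ) (hh : 3 ≤ h)
    (t : ℕ → ℕ)
    (hmono : ∀ i j, i < j → j < h → t i < t j)
    (hocc : ∀ p, ((v.drop p).take u.length = u ∧ p + u.length ≤ v.length) ↔
      ∃ i < h, t i = p)
    (hdense : ∀ i, i + 2 < h → t (i + 2) - t i ≤ u.length) :
    ∃ d, (∀ i, i + 1 < h → t (i + 1) - t i = d) ∧
      0 < d ∧ (∀ j, j + d < u.length → u[j]? = u[j + d]?) ∧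
      (∀ p, 0 < p → (∀ j, j + p < u.length → u[j]? = u[j + p]?) → d ≤ p) :=
  stmt2_general u v h hh t hmono hocc hdense
end

section
/- Let P and T be strings with n < |P| ≤ |T|, let B = P[1..n] and E = P[|P|-n+1..|P|]. For a string X define R_X = [1..|X|] minus the union of [i+1..i+n] over all occurrences i of B or E in X. Then for any offset i ∈ [0..|T|-|P|]: T[i+1..i+|P|] = P if and only if (1) PM(B,P) = (PM(B,T) - i) ∩ [0..|P|-n], (2) PM(E,P) = (PM(E,T) - i) ∩ [0..|P|-n], and (3) for every maximal interval [a..b] ⊆ R_P, P[a..b] = T[i+a..i+b]. -/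
/-- The set of occurrences (offsets, 0-indexed) of `X` in `Y`. -/
def PMset {α : Type*} (X Y : List α) : Set ℕ :=
  {j | (Y.drop j).take X.length = X ∧ j + X.length ≤ Y.length}

/-- The set of positions of `X` (0-indexed) not covered by any occurrence of the
length-`n` prefix `B` or suffix `E` of the pattern `P`. -/
def Rset {α : Type*} (P : List α) (n : ℕ) (X : List α) : Set ℕ :=
  {p | p < X.length ∧
    ∀ j ∈ PMset (P.take n) X ∪ PMset (P.drop (P.length - n)) X, ¬ (j ≤ p ∧ p < j + n)}

/-- `[a..b]` is a maximal interval of `R`. -/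
def MaxInterval (R : Set ℕ) (a b : ℕ) : Prop :=
  a ≤ b ∧ Set.Icc a b ⊆ R ∧ (∀ p, p + 1 = a → p ∉ R) ∧ b + 1 ∉ R

private lemma takedrop_eq_iff {α : Type*} (X Y : List α) (j : ℕ)
    (_hj : j + X.length ≤ Y.length) :
    (Y.drop j).take X.length = X ↔ ∀ p < X.length, X[p]? = Y[j + p]? := by
  constructor
  · intro h p hp
    rw [← h, List.getElem?_take, if_pos hp, List.getElem?_drop]
  · intro h
    apply List.ext_getElem?
    intro k
    by_cases hk : k < X.length
    · rw [List.getElem?_take, if_pos hk, List.getElem?_drop, ← h k hk]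
    · rw [List.getElem?_take, if_neg hk, List.getElem?_eq_none (le_of_not_gt hk)]

private lemma mem_PMset_iff {α : Type*} (X Y : List α) (j : ℕ) :
    j ∈ PMset X Y ↔ j + X.length ≤ Y.length ∧ ∀ p < X.length, X[p]? = Y[j + p]? := by
  constructor
  · rintro ⟨h1, h2⟩
    exact ⟨h2, (takedrop_eq_iff X Y j h2).1 h1⟩
  · rintro ⟨h1, h2⟩
    exact ⟨(takedrop_eq_iff X Y j h1).2 h2, h1⟩

open Classical in
private lemma exists_maxInterval (R : Set ℕ) (N : ℕ) (hbdd : ∀ x ∈ R, x < N)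
    (p : ℕ) (hp : p ∈ R) : ∃ a b, MaxInterval R a b ∧ a ≤ p ∧ p ≤ b := by
  have hex : ∃ a, Set.Icc a p ⊆ R := ⟨p, by simpa using hp⟩
  set a := Nat.find hex with ha
  have haR : Set.Icc a p ⊆ R := Nat.find_spec hex
  have hap : a ≤ p := Nat.find_min' hex (by simpa using hp)
  set b := Nat.findGreatest (fun b => Set.Icc p b ⊆ R) N with hb
  have hpb : p ≤ b := Nat.le_findGreatest (le_of_lt (hbdd p hp)) (by simpa using hp)
  have hbR : Set.Icc p b ⊆ R := Nat.findGreatest_spec (P := fun b => Set.Icc p b ⊆ R) (le_of_lt (hbdd p hp)) (by simpa using hp)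
  refine ⟨a, b, ⟨hap.trans hpb, ?_, ?_, ?_⟩, hap, hpb⟩
  · intro x ⟨hx1, hx2⟩
    by_cases hxp : x ≤ p
    · exact haR ⟨hx1, hxp⟩
    · exact hbR ⟨le_of_not_ge hxp, hx2⟩
  · intro q hq hqR
    have : Set.Icc q p ⊆ R := by
      intro x ⟨hx1, hx2⟩
      rcases eq_or_lt_of_le hx1 with h | h
      · exact h ▸ hqR
      · exact haR ⟨by omega, hx2⟩
    have := Nat.find_min' hex this
    omega
  · intro hb1
    have hsub : Set.Icc p (b + 1) ⊆ R := by
      intro x ⟨hx1, hx2⟩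
      rcases eq_or_lt_of_le hx2 with h | h
      · exact h ▸ hb1
      · exact hbR ⟨hx1, by omega⟩
    have := Nat.le_findGreatest (P := fun b => Set.Icc p b ⊆ R) (le_of_lt (hbdd _ hb1)) hsub
    omega

/-- Correctness of the long-pattern matching test: for `n < |P| ≤ |T|` and an offset
`i`, we have `T[i..i+|P|-1] = P` iff the occurrences of the prefix `B = P[0..n-1]` and
the suffix `E = P[|P|-n..]` in `P` equal the shifted occurrences in `T` (restricted to
`[0..|P|-n]`), and every maximal uncovered interval of `P` matches the corresponding
positions of `T`. -/
theorem stmt8 {α : Type*} [DecidableEq α] (P T : List α) (n : ℕ)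
    (hn : n < P.length) (hPT : P.length ≤ T.length)
    (i : ℕ) (hi : i + P.length ≤ T.length) :
    (T.drop i).take P.length = P ↔
      (PMset (P.take n) P =
        {j | j + i ∈ PMset (P.take n) T ∧ j ≤ P.length - n}) ∧
      (PMset (P.drop (P.length - n)) P =
        {j | j + i ∈ PMset (P.drop (P.length - n)) T ∧ j ≤ P.length - n}) ∧
      (∀ a b, MaxInterval (Rset P n P) a b →
        ∀ p, a ≤ p → p ≤ b → P[p]? = T[i + p]?) := by
  set L := P.length with hL
  have hB : (P.take n).length = n := by simp [List.length_take]; omega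
  have hE : (P.drop (L - n)).length = n := by simp [List.length_drop]; omega
  constructor
  · intro hT
    have H : ∀ p < L, P[p]? = T[i + p]? := (takedrop_eq_iff P T i hi).1 hT
    have key : ∀ X : List α, X.length = n →
        PMset X P = {j | j + i ∈ PMset X T ∧ j ≤ L - n} := by
      intro X hX
      ext j
      simp only [mem_PMset_iff, hX, Set.mem_setOf_eq]
      constructor
      · rintro ⟨hj, hjm⟩
        refine ⟨⟨by omega, ?_⟩, by omega⟩
        intro p hp
        rw [show j + i + p = i + (j + p) from by omega, ← H (j + p) (by omega)]
        exact hjm p hp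
      · rintro ⟨⟨hjT, hjm⟩, hjn⟩
        refine ⟨by omega, ?_⟩
        intro p hp
        rw [H (j + p) (by omega), show i + (j + p) = j + i + p from by omega]
        exact hjm p hp
    refine ⟨key _ hB, key _ hE, ?_⟩
    intro a b hM p hap hpb
    exact H p (hM.2.1 ⟨hap, hpb⟩).1
  · rintro ⟨h1, h2, h3⟩
    apply (takedrop_eq_iff P T i hi).2
    intro p hp
    by_cases hpR : p ∈ Rset P n P
    · obtain ⟨a, b, hM, hap, hpb⟩ :=
        exists_maxInterval _ L (fun x hx => hx.1) p hpR
      exact h3 a b hM p hap hpb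
    · have hcov : ∃ j ∈ PMset (P.take n) P ∪ PMset (P.drop (L - n)) P,
          j ≤ p ∧ p < j + n := by
        simp only [Rset, Set.mem_setOf_eq] at hpR
        push_neg at hpR
        exact hpR hp
      obtain ⟨j, hj, hjp, hpj⟩ := hcov
      have hq : p - j < n := by omega
      rcases hj with hjm | hjm
      · have hjT : j + i ∈ PMset (P.take n) T := by
          have := h1 ▸ hjm
          exact this.1
        obtain ⟨_, hm1⟩ := (mem_PMset_iff _ _ _).1 hjm
        obtain ⟨_, hm2⟩ := (mem_PMset_iff _ _ _).1 hjT
        rw [hB] at hm1 hm2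
        have e1 : (P.take n)[p - j]? = P[p]? := by
          have := hm1 (p - j) hq; rwa [show j + (p - j) = p from by omega] at this
        have e2 : (P.take n)[p - j]? = T[i + p]? := by
          have := hm2 (p - j) hq; rwa [show j + i + (p - j) = i + p from by omega] at this
        rw [← e1, e2]
      · have hjT : j + i ∈ PMset (P.drop (L - n)) T := by
          have := h2 ▸ hjm
          exact this.1
        obtain ⟨_, hm1⟩ := (mem_PMset_iff _ _ _).1 hjm
        obtain ⟨_, hm2⟩ := (mem_PMset_iff _ _ _).1 hjT
        rw [hE] at hm1 hm2
        have e1 : (P.drop (L - n))[p - j]? = P[p]? := by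
          have := hm1 (p - j) hq; rwa [show j + (p - j) = p from by omega] at this
        have e2 : (P.drop (L - n))[p - j]? = T[i + p]? := by
          have := hm2 (p - j) hq; rwa [show j + i + (p - j) = i + p from by omega] at this
        rw [← e1, e2]
end

section
/- For every positive integer t there exists a set D ⊆ [0..t-1] with |D| = O(√t) such that for all integers i, j there exist i', j' ∈ D with j - i ≡ j' - i' (mod t). -/
/-- Existence of difference covers: for every positive `t` there is a set
`D ⊆ [0..t-1]` of size `O(√t)` (indeed at most `2(⌊√t⌋+1) + 1`) such that every residue
modulo `t` is a difference of two elements of `D`. -/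
theorem stmt11 (t : ℕ) (ht : 0 < t) :
    ∃ D : Finset ℕ, D ⊆ Finset.range t ∧ D.card ≤ 2 * (Nat.sqrt t + 1) + 1 ∧
      ∀ i j : ℤ, ∃ i' ∈ D, ∃ j' ∈ D, j - i ≡ (j' : ℤ) - (i' : ℤ) [ZMOD t] := by
  by_cases h1 : t = 1
  · subst h1
    exact ⟨{0}, by simp, by simp, fun i j => ⟨0, by simp, 0, by simp, Int.modEq_one⟩⟩
  set s := Nat.sqrt t + 1 with hs
  have ht2 : 2 ≤ t := by omega
  have hst : s ≤ t := by
    have := Nat.sqrt_lt_self (show 1 < t by omega); omega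
  have hts : t < s * s := by
    have := Nat.lt_succ_sqrt t
    simpa [hs, Nat.succ_eq_add_one] using this
  have hs0 : 0 < s := by omega
  refine ⟨Finset.range t ∩ (Finset.range s ∪ (Finset.range s).image (· * s)),
    Finset.inter_subset_left, ?_, ?_⟩
  · calc (Finset.range t ∩ (Finset.range s ∪ (Finset.range s).image (· * s))).card
        ≤ (Finset.range s ∪ (Finset.range s).image (· * s)).card :=
          Finset.card_le_card Finset.inter_subset_right
      _ ≤ (Finset.range s).card + ((Finset.range s).image (· * s)).card :=
          Finset.card_union_le _ _
      _ ≤ s + s := by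
          gcongr
          · simp
          · calc ((Finset.range s).image (· * s)).card ≤ (Finset.range s).card :=
                Finset.card_image_le
              _ = s := by simp
      _ ≤ 2 * (Nat.sqrt t + 1) + 1 := by omega
  · intro i j
    set r := (j - i) % (t : ℤ) with hr
    have htz : (0 : ℤ) < t := by exact_mod_cast ht
    have hr0 : 0 ≤ r := Int.emod_nonneg _ (by omega)
    have hrt : r < t := Int.emod_lt_of_pos _ htz
    set n := r.toNat with hn
    have hnr : (n : ℤ) = r := Int.toNat_of_nonneg hr0
    have hnt : n < t := by omega
    have h1' : j - i ≡ r [ZMOD t] := (Int.emod_emod_of_dvd (j - i) dvd_rfl).symm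
    set q := n / s with hq
    set u := n % s with hu
    have hqu : q * s + u = n := Nat.div_add_mod' n s
    have hus : u < s := Nat.mod_lt _ hs0
    have hqsle : q * s ≤ n := Nat.le.intro hqu
    have hqs : q < s := by
      rw [hq, Nat.div_lt_iff_lt_mul hs0]
      exact lt_trans hnt hts
    have hsucc : (q + 1) * s = q * s + s := by ring
    by_cases hu0 : u = 0
    · -- n = q * s
      refine ⟨0, ?_, q * s, ?_, ?_⟩
      · simp [Finset.mem_inter, ht, hs0]
      · simp only [Finset.mem_inter, Finset.mem_union, Finset.mem_image, Finset.mem_range]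
        exact ⟨lt_of_le_of_lt hqsle hnt, Or.inr ⟨q, hqs, rfl⟩⟩
      · have hquz : (q : ℤ) * s + u = n := by exact_mod_cast hqu
        have : ((q * s : ℕ) : ℤ) - (0 : ℕ) = r := by push_cast at hquz ⊢; omega
        rw [this]; exact h1'
    · -- u > 0
      have hi'mem : s - u ∈ Finset.range t ∩ (Finset.range s ∪ (Finset.range s).image (· * s)) := by
        simp only [Finset.mem_inter, Finset.mem_union, Finset.mem_range]
        exact ⟨by omega, Or.inl (by omega)⟩
      have hquz : (q : ℤ) * s + u = n := by exact_mod_cast hqu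
      by_cases hw : (q + 1) * s < t
      · have hq1s : q + 1 < s := by
          by_contra h
          have : s * s ≤ (q + 1) * s := Nat.mul_le_mul_right _ (by omega)
          omega
        refine ⟨s - u, hi'mem, (q + 1) * s, ?_, ?_⟩
        · simp only [Finset.mem_inter, Finset.mem_union, Finset.mem_image, Finset.mem_range]
          exact ⟨hw, Or.inr ⟨q + 1, hq1s, rfl⟩⟩
        · have : (((q + 1) * s : ℕ) : ℤ) - ((s - u : ℕ) : ℤ) = r := by
            push_cast [Nat.cast_sub hus.le]
            nlinarith [hquz, hnr]
          rw [this]; exact h1'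
      · -- wraparound case
        have hjlt : (q + 1) * s - t < s := by omega
        refine ⟨s - u, hi'mem, (q + 1) * s - t, ?_, ?_⟩
        · simp only [Finset.mem_inter, Finset.mem_union, Finset.mem_range]
          exact ⟨by omega, Or.inl hjlt⟩
        · have key : (((q + 1) * s - t : ℕ) : ℤ) - ((s - u : ℕ) : ℤ) = r - t := by
            push_cast [Nat.cast_sub hus.le, Nat.cast_sub (show t ≤ (q + 1) * s by omega)]
            nlinarith [hquz, hnr]
          rw [key]
          have h2 : r ≡ r - t [ZMOD t] := by
            have h3 : (t : ℤ) ≡ 0 [ZMOD t] := Int.modEq_zero_iff_dvd.mpr dvd_rfl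
            simpa using ((Int.ModEq.refl r).sub h3).symm
          exact h1'.trans h2
end

section
/- Consider a string S partitioned into blocks of length m (last block possibly shorter), each block B assigned its rank (number of distinct lexicographically smaller blocks) among all blocks. If A is a prefix of B (as strings) with |A| < |B|, and |A| is not a multiple of m, then writing α = ⌈|A|/m⌉, the renamed strings satisfy A'[1..α-1] = B'[1..α-1] and A'[α] < B'[α]; hence A' ≺lex B'. -/
lemma go_spec {γ : Type*} (n : ℕ) : ∀ (xs : List γ) (acc₁ : Array γ) (acc₂ : Array (List γ)),
    0 < acc₁.size → acc₁.size ≤ n →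
    List.toChunks.go n xs acc₁ acc₂ =
      acc₂.toList ++ (acc₁.toList ++ xs.take (n - acc₁.size)) ::
        List.toChunks n (xs.drop (n - acc₁.size)) := by
  intro xs
  induction xs with
  | nil =>
    intro acc₁ acc₂ h1 h2
    simp [List.toChunks.go, List.toChunks]
  | cons x xs ih =>
    intro acc₁ acc₂ h1 h2
    rw [List.toChunks.go]
    by_cases h : acc₁.size = n
    · simp only [h, beq_self_eq_true, if_true]
      rw [ih _ _ (by simp) (by simp; omega)]
      obtain ⟨k, rfl⟩ : ∃ k, n = k + 1 := ⟨n - 1, by omega⟩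
      have : List.toChunks (k+1) (x :: xs) = List.toChunks.go (k+1) xs #[x] #[] := by
        rw [List.toChunks]
        omega
      rw [ih _ _ (by simp) (by simp)] at this
      simp [this, h]
    · have hb : (acc₁.size == n) = false := by simp [h]
      rw [hb]
      simp only [Bool.false_eq_true, if_false]
      rw [ih _ _ (by simp) (by simp; omega)]
      have h3 : acc₁.size < n := lt_of_le_of_ne h2 h
      have h4 : n - acc₁.size = (n - (acc₁.size + 1)) + 1 := by omega
      simp [h4, List.take_succ_cons]

lemma toChunks_cons' {γ : Type*} {m : ℕ} (hm : 0 < m) (x : γ) (xs : List γ) :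
    List.toChunks m (x :: xs) = (x :: xs).take m :: List.toChunks m ((x :: xs).drop m) := by
  obtain ⟨k, rfl⟩ : ∃ k, m = k + 1 := ⟨m - 1, by omega⟩
  rw [List.toChunks]
  · rw [go_spec _ _ _ _ (by simp) (by simp)]
    simp
  · omega

lemma key_chunks {γ : Type*} {m : ℕ} (hm : 0 < m) :
    ∀ (n : ℕ) (A B : List γ), A.length = n → A <+: B → A.length < B.length →
      ¬ m ∣ A.length →
      ∃ C c c' D, A.toChunks m = C ++ [c] ∧ B.toChunks m = C ++ c' :: D ∧
        c <+: c' ∧ c.length < c'.length ∧ C.length = (A.length - 1) / m := by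
  intro n
  induction n using Nat.strong_induction_on with
  | _ n ih =>
    intro A B hn hpre hlen hmod
    have hA0 : A.length ≠ 0 := fun h => hmod (h ▸ dvd_zero m)
    obtain ⟨x, xs, rfl⟩ : ∃ x xs, A = x :: xs := by
      cases A with
      | nil => simp at hA0
      | cons x xs => exact ⟨x, xs, rfl⟩
    obtain ⟨y, ys, rfl⟩ : ∃ y ys, B = y :: ys := by
      cases B with
      | nil => simp at hlen
      | cons y ys => exact ⟨y, ys, rfl⟩
    obtain ⟨t, ht⟩ := hpre
    by_cases hcase : (x :: xs).length ≤ m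
    · -- base case: single chunk
      have hltm : (x :: xs).length < m :=
        lt_of_le_of_ne hcase (fun h => hmod (h ▸ dvd_refl m))
      refine ⟨[], x :: xs, (y :: ys).take m, List.toChunks m ((y :: ys).drop m), ?_, ?_, ?_, ?_, ?_⟩
      · rw [toChunks_cons' hm]
        rw [List.take_of_length_le hcase, List.drop_eq_nil_of_le hcase]
        simp [List.toChunks]
      · rw [toChunks_cons' hm]; simp
      · refine ⟨t.take (m - (x :: xs).length), ?_⟩
        rw [← ht, List.take_append, List.take_of_length_le hcase]
      · rw [List.length_take]
        simp only [List.length_cons] at hltm hlen ⊢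
        omega
      · simp only [List.length_nil, List.length_cons]
        have : xs.length + 1 - 1 < m := by simp only [List.length_cons] at hltm; omega
        rw [Nat.div_eq_of_lt this]
    · -- inductive step
      push_neg at hcase
      have hxs : (x :: xs).drop m <+: (y :: ys).drop m := by
        refine ⟨t, ?_⟩
        rw [← ht, List.drop_append, Nat.sub_eq_zero_of_le (le_of_lt hcase),
          List.drop_zero]
      have hlen' : ((x :: xs).drop m).length < ((y :: ys).drop m).length := by
        simp only [List.length_drop]; omega
      have hmod' : ¬ m ∣ ((x :: xs).drop m).length := by
        simp only [List.length_drop]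
        intro hdvd
        apply hmod
        have h2 := Nat.dvd_add hdvd (dvd_refl m)
        rwa [Nat.sub_add_cancel (le_of_lt hcase)] at h2
      obtain ⟨C, c, c', D, h1, h2, h3, h4, h5⟩ :=
        ih (((x :: xs).drop m).length) (by simp only [List.length_drop]; omega)
          ((x :: xs).drop m) ((y :: ys).drop m) rfl hxs hlen' hmod'
      have htake : (x :: xs).take m = (y :: ys).take m := by
        rw [← ht, List.take_append, Nat.sub_eq_zero_of_le (le_of_lt hcase),
          List.take_zero, List.append_nil]
      refine ⟨(x :: xs).take m :: C, c, c', D, ?_, ?_, h3, h4, ?_⟩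
      · rw [toChunks_cons' hm, h1]; simp
      · rw [toChunks_cons' hm, h2, htake]; simp
      · simp only [List.length_cons, h5, List.length_drop, List.length_cons]
        have e1 : xs.length + 1 - 1 = (xs.length + 1 - m - 1) + m := by
          simp only [List.length_cons] at hcase; omega
        rw [e1, Nat.add_div_right _ hm]

lemma prefix_lt {γ : Type*} [LinearOrder γ] {l₁ l₂ : List γ} (h : l₁ <+: l₂)
    (hlen : l₁.length < l₂.length) : l₁ < l₂ := by
  obtain ⟨t, rfl⟩ := h
  show List.Lex (· < ·) _ _
  induction l₁ with
  | nil =>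
    cases t with
    | nil => simp at hlen
    | cons a t => exact List.Lex.nil
  | cons a l ih =>
    exact List.Lex.cons (ih (by simp at hlen ⊢; omega))

lemma append_cons_lt {x y : ℕ} (P l₁ l₂ : List ℕ) (h : x < y) :
    P ++ x :: l₁ < P ++ y :: l₂ := by
  show List.Lex (· < ·) _ _
  induction P with
  | nil => exact List.Lex.rel h
  | cons a P ih => exact List.Lex.cons ih

/-- Renaming, proper-prefix case: if `A` is a proper prefix of `B` with `|A| < |B|` and
`|A|` not a multiple of the block length `m`, then letting `α = ⌈|A|/m⌉`, the renamed
strings (each block replaced by its rank `r`, strictly monotone on the occurring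
blocks) agree on their first `α - 1` characters, differ at position `α` with
`A'[α] < B'[α]`, and hence `A' ≺lex B'`. -/
theorem stmt15 {γ : Type*} [LinearOrder γ] (m : ℕ) (hm : 0 < m) (A B : List γ)
    (r : List γ → ℕ)
    (hr : ∀ u ∈ A.toChunks m ++ B.toChunks m, ∀ v ∈ A.toChunks m ++ B.toChunks m,
      u < v → r u < r v)
    (hpre : A <+: B) (hlen : A.length < B.length) (hmod : ¬ m ∣ A.length) :
    ((A.toChunks m).map r).take ((A.length + m - 1) / m - 1) =
        ((B.toChunks m).map r).take ((A.length + m - 1) / m - 1) ∧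
      (∃ x y, ((A.toChunks m).map r)[(A.length + m - 1) / m - 1]? = some x ∧
        ((B.toChunks m).map r)[(A.length + m - 1) / m - 1]? = some y ∧ x < y) ∧
      (A.toChunks m).map r < (B.toChunks m).map r := by
  obtain ⟨C, c, c', D, h1, h2, h3, h4, h5⟩ :=
    key_chunks hm A.length A B rfl hpre hlen hmod
  have hA0 : A.length ≠ 0 := fun h => hmod (h ▸ dvd_zero m)
  have hk : (A.length + m - 1) / m - 1 = C.length := by
    have e1 : A.length + m - 1 = (A.length - 1) + m := by omega
    rw [e1, Nat.add_div_right _ hm, h5]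
    omega
  have hmem_c : c ∈ A.toChunks m ++ B.toChunks m := by
    rw [h1]; simp
  have hmem_c' : c' ∈ A.toChunks m ++ B.toChunks m := by
    rw [h2]; simp
  have hcc' : r c < r c' := hr c hmem_c c' hmem_c' (prefix_lt h3 h4)
  rw [hk, h1, h2]
  refine ⟨?_, ⟨r c, r c', ?_, ?_, hcc'⟩, ?_⟩
  · rw [List.map_append, List.map_append,
      List.take_left' (by simp), List.take_left' (by simp)]
  · rw [List.map_append, List.getElem?_append_right (by simp)]
    simp
  · rw [List.map_append, List.getElem?_append_right (by simp)]
    simp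
  · rw [List.map_append, List.map_append, List.map_singleton, List.map_cons]
    exact append_cons_lt _ _ _ hcc'
end

section
/- Let S be a string padded beyond its end with a dummy smallest character, t ≥ 1, and for each position i let S_i = S[i..i+t-1] and define the representative object of i as the pair (S_i, A_i) where A_i[k] equals the rank of the suffix S[i+k..] among suffixes starting in DC_t(S) if i+k ∈ DC_t(S), and -1 otherwise. Suppose the rank function is strictly monotone: for a', b' ∈ DC_t(S), S[a'..] ≺lex S[b'..] implies rank(a') < rank(b'). Then for positions a, b with S[a..] ≺lex S[b..]: if S_a ≠ S_b, then S_a ≺lex S_b; and if S_a = S_b, then for every k with A_a[k] ≠ -1 and A_b[k] ≠ -1, A_a[k] < A_b[k]. -/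
/-- Strict lexicographic comparison of suffixes of an (infinite, padded) string. -/
def SuffLt {α : Type*} [LinearOrder α] (S : ℕ → α) (a b : ℕ) : Prop :=
  ∃ ℓ, (∀ m < ℓ, S (a + m) = S (b + m)) ∧ S (a + ℓ) < S (b + ℓ)

/-- Correctness of the representative objects `(S_i, A_i)`: with
`A_i[k] = rank (i+k)` if `i+k ∈ DC_t(S)` and `-1` otherwise, and `rank` strictly
monotone on the sample suffixes, if `S[a..] ≺ S[b..]` then: when the length-`t` blocks
at `a` and `b` differ, the block at `a` is lexicographically strictly smaller; and when
the blocks are equal, every `k ∈ [0..t-1]` with `A_a[k] ≠ -1 ≠ A_b[k]` satisfies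
`A_a[k] < A_b[k]`. -/
theorem stmt19 {α : Type*} [LinearOrder α] (S : ℕ → α) (t : ℕ) (ht : 0 < t)
    (DC : Set ℕ) (rank : ℕ → ℕ)
    (hDC : ∀ a b : ℕ, ∃ k < t, a + k ∈ DC ∧ b + k ∈ DC)
    (hrank : ∀ a' ∈ DC, ∀ b' ∈ DC, SuffLt S a' b' → rank a' < rank b')
    (a b : ℕ) (hlt : SuffLt S a b) :
    ((∃ m < t, S (a + m) ≠ S (b + m)) →
      ∃ m < t, (∀ m' < m, S (a + m') = S (b + m')) ∧ S (a + m) < S (b + m)) ∧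
    ((∀ m < t, S (a + m) = S (b + m)) →
      ∀ k < t, a + k ∈ DC → b + k ∈ DC → rank (a + k) < rank (b + k)) := by
  obtain ⟨ℓ, hpre, hℓ⟩ := hlt
  constructor
  · rintro ⟨m, hm, hne⟩
    have hℓt : ℓ < t := by
      by_contra h
      exact hne (hpre m (lt_of_lt_of_le hm (le_of_not_gt h)))
    exact ⟨ℓ, hℓt, hpre, hℓ⟩
  · intro heq k hk haDC hbDC
    have htℓ : t ≤ ℓ := by
      by_contra h
      exact absurd (heq ℓ (lt_of_not_ge h)) (ne_of_lt hℓ)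
    have hkℓ : k ≤ ℓ := le_trans (le_of_lt hk) htℓ
    apply hrank _ haDC _ hbDC
    refine ⟨ℓ - k, fun m hm => ?_, ?_⟩
    · have : k + m < ℓ := by omega
      have := hpre (k + m) this
      simpa [add_assoc] using this
    · have h1 : a + k + (ℓ - k) = a + ℓ := by omega
      have h2 : b + k + (ℓ - k) = b + ℓ := by omega
      rw [h1, h2]; exact hℓ
end
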